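/- arXiv:1902.10325 — 2 statements merged into one kernel-verified Lean document; each statement's English description precedes it below -/
import Mathlib

section
/- Let X be a Polish space, (Ξ, 𝒜, ℙ) a complete probability space, T : Ξ → Ξ an ergodic measure-preserving transformation, M : Ξ ⇉ X a measurable set-valued map with closed values, g : X → ℝ ∪ {+∞} lower semicontinuous, and g_n : X → ℝ ∪ {+∞} a sequence of lower semicontinuous functions converging continuously to g. Set E_n(ξ) := ⋂_{k=1}^n M(T^k(ξ)) and M_as := {x ∈ X : x ∈ M(ξ) for ℙ-a.e. ξ}. Assume the robust problem min{g(x) : x ∈ M_as} is feasible (there exists x ∈ M_as with g(x) < +∞) and that, for ℙ-a.e. ξ, the sequence g_n is eventually level-compact on E_n(ξ). Then for ℙ-a.e. ξ ∈ Ξ: ⋂_{ε>0} liminf_n (ε-argmin_{E_n(ξ)} g_n) = argmin_{M_as} g = ⋂_{ε>0} limsup_n (ε-argmin_{E_n(ξ)} g_n), where liminf_n and limsup_n denote the Painlevé–Kuratowski inner and outer limits of sets. -/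
open Filter Topology MeasureTheory Set

noncomputable section

/-- Epi-convergence of a sequence of extended-real-valued functions on a metric space:
for every `x`, (a) `liminf f n (u n) ≥ g x` along every sequence `u → x`, and
(b) `limsup f n (u n) ≤ g x` along some sequence `u → x`. -/
def EpiConv {X : Type*} [MetricSpace X] (f : ℕ → X → EReal) (g : X → EReal) : Prop :=
  ∀ x : X,
    (∀ u : ℕ → X, Tendsto u atTop (𝓝 x) → g x ≤ atTop.liminf fun n => f n (u n)) ∧
    (∃ u : ℕ → X, Tendsto u atTop (𝓝 x) ∧ (atTop.limsup fun n => f n (u n)) ≤ g x)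

/-- Continuous convergence: `f n (u n) → g x` for every `x` and every sequence `u → x`. -/
def ContConv {X : Type*} [MetricSpace X] (f : ℕ → X → EReal) (g : X → EReal) : Prop :=
  ∀ x : X, ∀ u : ℕ → X, Tendsto u atTop (𝓝 x) →
    Tendsto (fun n => f n (u n)) atTop (𝓝 (g x))

/-- Infimal value of `h` on `C`. -/
def vOn {X : Type*} (h : X → EReal) (C : Set X) : EReal := ⨅ x ∈ C, h x

open Classical in
/-- ε-infimal value of `h` on `C`: `inf_C h + ε` if `inf_C h > -∞`, and `-1/ε` otherwise
(with the convention `1/0 = +∞`, so `-1/0 = -∞`). -/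
def vEpsOn {X : Type*} (h : X → EReal) (C : Set X) (ε : ℝ) : EReal :=
  if vOn h C = ⊥ then (if ε = 0 then ⊥ else ((-ε⁻¹ : ℝ) : EReal))
  else vOn h C + (ε : EReal)

/-- ε-argmin of `h` on `C`: the points of `C` where `h` is below the ε-infimal value. -/
def argminOn {X : Type*} (h : X → EReal) (C : Set X) (ε : ℝ) : Set X :=
  {x ∈ C | h x ≤ vEpsOn h C ε}

/-- Painlevé–Kuratowski outer limit: points whose distance to `S n` has liminf 0. -/
def outerLim {X : Type*} [MetricSpace X] (S : ℕ → Set X) : Set X :=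
  {x | atTop.liminf (fun n => EMetric.infEdist x (S n)) = 0}

/-- Painlevé–Kuratowski inner limit: points whose distance to `S n` has limsup 0. -/
def innerLim {X : Type*} [MetricSpace X] (S : ℕ → Set X) : Set X :=
  {x | atTop.limsup (fun n => EMetric.infEdist x (S n)) = 0}

open Classical in
/-- Indicator function `δ_A`: `0` on `A`, `+∞` off `A`. -/
def delta {X : Type*} (A : Set X) : X → EReal := fun x => if x ∈ A then 0 else ⊤

/-- The sequence `g n` is eventually level-compact on the sets `C n`: for every level `α`
there is `N` such that the union over `n ≥ N` of the `α`-sublevel sets of `g n` on `C n`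
is relatively compact. -/
def EvLevelCompact {X : Type*} [MetricSpace X] (g : ℕ → X → EReal) (C : ℕ → Set X) : Prop :=
  ∀ α : ℝ, ∃ N : ℕ, IsCompact (closure (⋃ n ∈ Ici N, {x ∈ C n | g n x ≤ (α : EReal)}))

/-- Measurability of a set-valued map: preimages of open sets are measurable. -/
def MeasurableMultifun {Ξ X : Type*} [MeasurableSpace Ξ] [TopologicalSpace X]
    (M : Ξ → Set X) : Prop :=
  ∀ U : Set X, IsOpen U → MeasurableSet {ξ | (M ξ ∩ U).Nonempty}

/-- `P` is the countable product `ℙ^∞` of the probability measure `ℙ`: every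
finite-dimensional cylinder has product measure. -/
def IsProductMeasure {Ξ : Type*} [MeasurableSpace Ξ] (P : Measure (ℕ → Ξ))
    (ℙ : Measure Ξ) : Prop :=
  ∀ (s : Finset ℕ) (A : ℕ → Set Ξ), (∀ i, MeasurableSet (A i)) →
    P {ω | ∀ i ∈ s, ω i ∈ A i} = ∏ i ∈ s, ℙ (A i)

/-- Moreau envelope `e_λ g`. -/
def moreau {d : ℕ} (g : EuclideanSpace ℝ (Fin d) → EReal) (lam : ℝ)
    (x : EuclideanSpace ℝ (Fin d)) : EReal :=
  ⨅ u, g u + ((‖x - u‖ ^ 2 / (2 * lam) : ℝ) : EReal)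

/-!
Ergodicity enters only through the identity `⋂ n, E n ξ = M_as` for a.e. `ξ`. A countable dense
subset of `M_as` lies in every `M (T^[k] ξ)` almost surely, and `M` has closed values; conversely,
if `x ∉ M_as` then some basic open set around `x` misses `M ζ` with positive probability, and an
ergodic map returns to that event at some time `k ≥ 1`.

The rest is deterministic: for closed decreasing sets `E n` with intersection `S`, continuous
convergence and eventual level-compactness give `inf_{E n} g n → inf_S g`, which is finite by
feasibility and lower semicontinuity; hence the `ε`-argmins converge to `argmin_S g` in both the
inner and the outer Painlevé–Kuratowski sense.
-/

open scoped ENNReal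

section Limits

variable {X : Type*} [MetricSpace X]

lemma innerLim_subset_outerLim (S : ℕ → Set X) : innerLim S ⊆ outerLim S := fun x hx =>
  le_antisymm ((liminf_le_limsup (by isBoundedDefault) (by isBoundedDefault)).trans_eq hx)
    zero_le

lemma exists_tendsto_of_mem_outerLim {S : ℕ → Set X} {x : X} (hx : x ∈ outerLim S) :
    ∃ φ : ℕ → ℕ, StrictMono φ ∧ ∃ y : ℕ → X, (∀ j, y j ∈ S (φ j)) ∧
      Tendsto y atTop (𝓝 x) := by
  obtain ⟨φ, hφ, hφS⟩ := extraction_forall_of_frequently fun j : ℕ =>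
    frequently_lt_of_liminf_lt (by isBoundedDefault)
      (hx.trans_lt (by simp) : _ < (j : ℝ≥0∞)⁻¹)
  choose y hyS hyx using fun j => Metric.infEDist_lt_iff.1 (hφS j)
  refine ⟨φ, hφ, y, hyS, tendsto_iff_edist_tendsto_0.2 ?_⟩
  exact tendsto_of_tendsto_of_tendsto_of_le_of_le tendsto_const_nhds
    ENNReal.tendsto_inv_nat_nhds_zero (fun _ => zero_le)
    fun j => (edist_comm x (y j) ▸ hyx j).le

end Limits

lemma Antitone.mem_iInter_of_tendsto {X : Type*} [TopologicalSpace X] {E : ℕ → Set X}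
    (hE_anti : Antitone E) (hE_closed : ∀ n, IsClosed (E n)) {φ : ℕ → ℕ}
    (hφ : Tendsto φ atTop atTop) {y : ℕ → X} {x : X} (hy : ∀ i, y i ∈ E (φ i))
    (hyx : Tendsto y atTop (𝓝 x)) : x ∈ ⋂ n, E n :=
  mem_iInter.2 fun n => (hE_closed n).mem_of_tendsto hyx <|
    (hφ.eventually_ge_atTop n).mono fun i hi => hE_anti hi (hy i)

section Convergence

variable {X : Type*} [MetricSpace X] {gn : ℕ → X → EReal} {g : X → EReal}

lemma ContConv.tendsto_comp_strictMono (hcc : ContConv gn g) {φ : ℕ → ℕ}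
    (hφ : StrictMono φ) {y : ℕ → X} {x : X} (hyx : Tendsto y atTop (𝓝 x)) :
    Tendsto (fun i => gn (φ i) (y i)) atTop (𝓝 (g x)) := by
  set u : ℕ → X := Function.extend φ y fun _ => x
  have hux : Tendsto u atTop (𝓝 x) := by
    intro s hs
    obtain ⟨I, hI⟩ := eventually_atTop.1 (hyx hs)
    refine eventually_atTop.2 ⟨φ I, fun m hm => ?_⟩
    by_cases hm' : ∃ i, φ i = m
    · obtain ⟨i, rfl⟩ := hm'
      simpa [u, hφ.injective.extend_apply] using hI i (hφ.le_iff_le.1 hm)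
    · simpa [u, Function.extend_apply' _ _ _ hm'] using mem_of_mem_nhds hs
  simpa [u, Function.comp_def, hφ.injective.extend_apply] using
    (hcc x u hux).comp hφ.tendsto_atTop

lemma EvLevelCompact.exists_tendsto_subseq {E : ℕ → Set X} (hlc : EvLevelCompact gn E)
    (c : ℝ) {φ : ℕ → ℕ} (hφ : Tendsto φ atTop atTop) {z : ℕ → X} (hzE : ∀ j, z j ∈ E (φ j))
    (hzc : ∀ j, gn (φ j) (z j) ≤ c) :
    ∃ x, ∃ ψ : ℕ → ℕ, StrictMono ψ ∧ Tendsto (z ∘ ψ) atTop (𝓝 x) := by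
  obtain ⟨N, hK⟩ := hlc c
  have hzK : ∀ᶠ j in atTop, z j ∈ closure (⋃ n ∈ Ici N, {x ∈ E n | gn n x ≤ c}) :=
    (hφ.eventually_ge_atTop N).mono fun j hj => subset_closure (mem_biUnion hj ⟨hzE j, hzc j⟩)
  obtain ⟨x, -, ψ, hψ, hzx⟩ := hK.tendsto_subseq' hzK.frequently
  exact ⟨x, ψ, hψ, hzx⟩

end Convergence

section OptimalValue

variable {X : Type*} {h : X → EReal} {C : Set X}

lemma vOn_le {x : X} (hx : x ∈ C) : vOn h C ≤ h x := iInf₂_le x hx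

lemma exists_lt_of_vOn_lt {c : EReal} (hc : vOn h C < c) : ∃ x ∈ C, h x < c := by
  simpa [vOn, iInf_lt_iff] using hc

lemma vEpsOn_of_ne_bot (hv : vOn h C ≠ ⊥) (ε : ℝ) : vEpsOn h C ε = vOn h C + ε :=
  if_neg hv

lemma mem_argminOn_zero_iff {a : ℝ} (ha : vOn h C = a) {x : X} :
    x ∈ argminOn h C 0 ↔ x ∈ C ∧ h x ≤ a := by
  simp [argminOn, vEpsOn_of_ne_bot (ha ▸ EReal.coe_ne_bot a), ha]

lemma tendsto_vEpsOn {h : ℕ → X → EReal} {C : ℕ → Set X} {a : ℝ}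
    (hv : Tendsto (fun n => vOn (h n) (C n)) atTop (𝓝 (a : EReal))) (ε : ℝ) :
    Tendsto (fun n => vEpsOn (h n) (C n) ε) atTop (𝓝 ((a + ε : ℝ) : EReal)) := by
  have hadd : Tendsto (fun n => vOn (h n) (C n) + ε) atTop (𝓝 ((a + ε : ℝ) : EReal)) := by
    rw [EReal.coe_add]
    exact (EReal.continuousAt_add (Or.inl (EReal.coe_ne_top a))
      (Or.inl (EReal.coe_ne_bot a))).tendsto.comp (hv.prodMk_nhds tendsto_const_nhds)
  refine hadd.congr' ?_
  filter_upwards [hv.eventually_ne (EReal.coe_ne_bot a)] with n hn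
  exact (vEpsOn_of_ne_bot hn ε).symm

end OptimalValue

section Deterministic

variable {X : Type*} [MetricSpace X] {E : ℕ → Set X} {gn : ℕ → X → EReal} {g : X → EReal}

lemma limsup_vOn_le {S : Set X} (hS : ∀ n, S ⊆ E n) (hcc : ContConv gn g) :
    atTop.limsup (fun n => vOn (gn n) (E n)) ≤ vOn g S :=
  le_iInf₂ fun x hx =>
    calc atTop.limsup (fun n => vOn (gn n) (E n)) ≤ atTop.limsup (fun n => gn n x) :=
          limsup_le_limsup (Eventually.of_forall fun n => vOn_le (hS n hx))
      _ = g x := (hcc x _ tendsto_const_nhds).limsup_eq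

lemma vOn_iInter_le_liminf (hE_closed : ∀ n, IsClosed (E n)) (hE_anti : Antitone E)
    (hcc : ContConv gn g) (hlc : EvLevelCompact gn E) :
    vOn g (⋂ n, E n) ≤ atTop.liminf (fun n => vOn (gn n) (E n)) := by
  by_contra! hlt
  obtain ⟨c, hc, hcv⟩ := EReal.exists_between_coe_real hlt
  obtain ⟨φ, hφ, hφc⟩ :=
    extraction_of_frequently_atTop (frequently_lt_of_liminf_lt (by isBoundedDefault) hc)
  choose z hzE hzc using fun j => exists_lt_of_vOn_lt (hφc j)
  obtain ⟨x, ψ, hψ, hzx⟩ :=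
    hlc.exists_tendsto_subseq c hφ.tendsto_atTop hzE fun j => (hzc j).le
  have hφψ : StrictMono (φ ∘ ψ) := hφ.comp hψ
  have hx : x ∈ ⋂ n, E n :=
    hE_anti.mem_iInter_of_tendsto hE_closed hφψ.tendsto_atTop (fun i => hzE (ψ i)) hzx
  have hgx : g x ≤ c := le_of_tendsto (hcc.tendsto_comp_strictMono hφψ hzx)
    (Eventually.of_forall fun i => (hzc (ψ i)).le)
  exact hcv.not_ge ((vOn_le hx).trans hgx)

lemma tendsto_vOn_iInter (hE_closed : ∀ n, IsClosed (E n)) (hE_anti : Antitone E)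
    (hcc : ContConv gn g) (hlc : EvLevelCompact gn E) :
    Tendsto (fun n => vOn (gn n) (E n)) atTop (𝓝 (vOn g (⋂ n, E n))) :=
  tendsto_of_le_liminf_of_limsup_le (vOn_iInter_le_liminf hE_closed hE_anti hcc hlc)
    (limsup_vOn_le (iInter_subset E) hcc)

lemma vOn_ne_bot {S : Set X} (hS : ∀ n, S ⊆ E n) (hg_noBot : ∀ x, g x ≠ ⊥)
    (hg_lsc : LowerSemicontinuous g) (hcc : ContConv gn g) (hlc : EvLevelCompact gn E) :
    vOn g S ≠ ⊥ := by
  intro hbot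
  choose z hzS hzm using fun m : ℕ =>
    exists_lt_of_vOn_lt (hbot ▸ EReal.bot_lt_coe (-m : ℝ) : vOn g S < (-m : ℝ))
  have hn : ∀ m, ∃ n, gn n (z m) < (1 : ℝ) ∧ m ≤ n := fun m =>
    (((hcc (z m) _ tendsto_const_nhds).eventually_lt_const ((hzm m).trans
      (EReal.coe_lt_coe_iff.2 (by linarith [(m.cast_nonneg : (0 : ℝ) ≤ m)])))).and
      (eventually_ge_atTop m)).exists
  choose n hn1 hnm using hn
  obtain ⟨x, ψ, hψ, hzx⟩ := hlc.exists_tendsto_subseq 1 (tendsto_atTop_mono hnm tendsto_id)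
    (fun m => hS _ (hzS m)) fun m => (hn1 m).le
  -- `g ∘ z` tends to `⊥`, which lower semicontinuity forbids at the cluster point `x`
  obtain ⟨c, hc, hcx⟩ := EReal.exists_between_coe_real (bot_lt_iff_ne_bot.2 (hg_noBot x))
  have hsmall : ∀ᶠ m in atTop, g (z m) < c := (eventually_ge_atTop ⌈-c⌉₊).mono fun m hm =>
    (hzm m).trans_le (EReal.coe_le_coe_iff.2 (by linarith [Nat.ceil_le.1 hm]))
  obtain ⟨i, hi₁, hi₂⟩ :=
    ((hzx.eventually (hg_lsc x c hcx)).and (hψ.tendsto_atTop.eventually hsmall)).exists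
  exact hi₁.not_gt hi₂

variable {a : ℝ}

lemma argminOn_subset_iInter_innerLim {S : Set X} (hS : ∀ n, S ⊆ E n) (hcc : ContConv gn g)
    (hv : Tendsto (fun n => vOn (gn n) (E n)) atTop (𝓝 (a : EReal))) (ha : vOn g S = a) :
    argminOn g S 0 ⊆ ⋂ ε ∈ Ioi (0 : ℝ), innerLim (fun n => argminOn (gn n) (E n) ε) := by
  intro x hx
  rw [mem_argminOn_zero_iff ha] at hx
  refine mem_iInter₂.2 fun ε (hε : 0 < ε) => ?_
  have hlt : g x < ((a + ε / 2 : ℝ) : EReal) :=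
    hx.2.trans_lt (by exact_mod_cast (by linarith))
  have hmem : ∀ᶠ n in atTop, x ∈ argminOn (gn n) (E n) ε := by
    filter_upwards [(hcc x _ tendsto_const_nhds).eventually_lt_const hlt,
      (tendsto_vEpsOn hv ε).eventually_const_lt
        (EReal.coe_lt_coe_iff.2 (by linarith) : ((a + ε / 2 : ℝ) : EReal) < (a + ε : ℝ))]
      with n hgn hvn
    exact ⟨hS n hx.1, (hgn.trans hvn).le⟩
  exact (limsup_congr (hmem.mono fun n hn => Metric.infEDist_zero_of_mem hn)).trans
    (limsup_const 0)

lemma iInter_outerLim_subset_argminOn (hE_closed : ∀ n, IsClosed (E n)) (hE_anti : Antitone E)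
    (hcc : ContConv gn g) (hv : Tendsto (fun n => vOn (gn n) (E n)) atTop (𝓝 (a : EReal)))
    (ha : vOn g (⋂ n, E n) = a) :
    ⋂ ε ∈ Ioi (0 : ℝ), outerLim (fun n => argminOn (gn n) (E n) ε) ⊆
      argminOn g (⋂ n, E n) 0 := by
  intro x hx
  rw [mem_iInter₂] at hx
  have hbound : ∀ ε > (0 : ℝ), x ∈ ⋂ n, E n ∧ g x ≤ ((a + ε : ℝ) : EReal) := by
    intro ε hε
    obtain ⟨φ, hφ, y, hy, hyx⟩ := exists_tendsto_of_mem_outerLim (hx ε hε)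
    refine ⟨hE_anti.mem_iInter_of_tendsto hE_closed hφ.tendsto_atTop (fun i => (hy i).1) hyx, ?_⟩
    exact le_of_tendsto_of_tendsto' (hcc.tendsto_comp_strictMono hφ hyx)
      ((tendsto_vEpsOn hv ε).comp hφ.tendsto_atTop) fun i => (hy i).2
  refine (mem_argminOn_zero_iff ha).2 ⟨(hbound 1 one_pos).1, ?_⟩
  by_contra! hlt
  obtain ⟨c, hac, hcx⟩ := EReal.exists_between_coe_real hlt
  have hgx := (hbound (c - a) (sub_pos.2 (EReal.coe_lt_coe_iff.1 hac))).2
  rw [add_sub_cancel] at hgx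
  exact hcx.not_ge hgx

theorem argminOn_iInter_eq_iInter_innerLim_and_outerLim (hE_closed : ∀ n, IsClosed (E n))
    (hE_anti : Antitone E) (hg_noBot : ∀ x, g x ≠ ⊥) (hg_lsc : LowerSemicontinuous g)
    (hcc : ContConv gn g) (hfeas : ∃ x ∈ ⋂ n, E n, g x < ⊤) (hlc : EvLevelCompact gn E) :
    (⋂ ε ∈ Ioi (0 : ℝ), innerLim (fun n => argminOn (gn n) (E n) ε)) =
        argminOn g (⋂ n, E n) 0 ∧
      argminOn g (⋂ n, E n) 0 =
        ⋂ ε ∈ Ioi (0 : ℝ), outerLim (fun n => argminOn (gn n) (E n) ε) := by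
  obtain ⟨x₀, hx₀, hgx₀⟩ := hfeas
  have hne_top : vOn g (⋂ n, E n) ≠ ⊤ := ((vOn_le hx₀).trans_lt hgx₀).ne_top
  have hne_bot := vOn_ne_bot (iInter_subset E) hg_noBot hg_lsc hcc hlc
  obtain ⟨a, ha⟩ : ∃ a : ℝ, vOn g (⋂ n, E n) = a :=
    ⟨_, (EReal.coe_toReal hne_top hne_bot).symm⟩
  have hv := ha ▸ tendsto_vOn_iInter hE_closed hE_anti hcc hlc
  have h_inner := argminOn_subset_iInter_innerLim (iInter_subset E) hcc hv ha
  have h_outer := iInter_outerLim_subset_argminOn hE_closed hE_anti hcc hv ha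
  have h_io : (⋂ ε ∈ Ioi (0 : ℝ), innerLim (fun n => argminOn (gn n) (E n) ε)) ⊆
      ⋂ ε ∈ Ioi (0 : ℝ), outerLim (fun n => argminOn (gn n) (E n) ε) :=
    iInter₂_mono fun ε _ => innerLim_subset_outerLim _
  exact ⟨(h_io.trans h_outer).antisymm h_inner, (h_inner.trans h_io).antisymm h_outer⟩

end Deterministic

section Ergodic

open TopologicalSpace

variable {Ξ : Type*} [MeasurableSpace Ξ] {ℙ : Measure Ξ} {T : Ξ → Ξ}

lemma Ergodic.ae_exists_iterate_mem [IsFiniteMeasure ℙ] (hT : Ergodic T ℙ) {A : Set Ξ}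
    (hA : MeasurableSet A) (hA₀ : ℙ A ≠ 0) : ∀ᵐ ξ ∂ℙ, ∃ k, T^[k + 1] ξ ∈ A := by
  set C : Set Ξ := ⋃ k, T^[k + 1] ⁻¹' A
  have hC : MeasurableSet C := .iUnion fun k => hT.measurable.iterate (k + 1) hA
  have hTC : T ⁻¹' C ⊆ C := fun ξ hξ => by
    obtain ⟨k, hk⟩ := mem_iUnion.1 hξ
    exact mem_iUnion.2 ⟨k + 1, by rwa [mem_preimage, Function.iterate_succ_apply]⟩
  rcases hT.ae_empty_or_univ_of_preimage_ae_le hC.nullMeasurableSet hTC.eventuallyLE with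
    hnull | hfull
  · refine absurd ?_ hA₀
    rw [← hT.measure_preimage hA.nullMeasurableSet]
    exact measure_mono_null (fun ξ hξ => mem_iUnion.2 ⟨0, hξ⟩) (ae_eq_empty.1 hnull)
  · exact mem_of_superset (Filter.eventuallyEq_univ.1 hfull) fun ξ hξ => mem_iUnion.1 hξ

variable {X : Type*} [MetricSpace X] {M : Ξ → Set X}

lemma MeasureTheory.MeasurePreserving.ae_setOf_ae_mem_subset_iterate [SeparableSpace X]
    (hT : MeasurePreserving T ℙ ℙ) (hM_closed : ∀ ζ, IsClosed (M ζ)) :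
    ∀ᵐ ξ ∂ℙ, ∀ k, {y : X | ∀ᵐ ζ ∂ℙ, y ∈ M ζ} ⊆ M (T^[k] ξ) := by
  obtain ⟨D, hDS, hDc, hSD⟩ := (IsSeparable.of_separableSpace
    {y : X | ∀ᵐ ζ ∂ℙ, y ∈ M ζ}).exists_countable_dense_subset
  have hD : ∀ᵐ ξ ∂ℙ, ∀ k, ∀ d ∈ D, d ∈ M (T^[k] ξ) := ae_all_iff.2 fun k =>
    (ae_ball_iff hDc).2 fun d hd => (hT.iterate k).quasiMeasurePreserving.ae (hDS hd)
  filter_upwards [hD] with ξ hξ k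
  exact hSD.trans (closure_minimal (hξ k) (hM_closed _))

lemma Ergodic.ae_forall_mem_iterate_imp_ae_mem [IsFiniteMeasure ℙ]
    [SecondCountableTopology X] (hT : Ergodic T ℙ) (hM_closed : ∀ ζ, IsClosed (M ζ))
    (hM_meas : MeasurableMultifun M) :
    ∀ᵐ ξ ∂ℙ, ∀ x, (∀ k, x ∈ M (T^[k + 1] ξ)) → ∀ᵐ ζ ∂ℙ, x ∈ M ζ := by
  set 𝓑 := countableBasis X
  set A : Set X → Set Ξ := fun B => {ζ | ¬ (M ζ ∩ B).Nonempty}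
  have hrec : ∀ᵐ ξ ∂ℙ, ∀ B ∈ 𝓑, ℙ (A B) ≠ 0 → ∃ k, T^[k + 1] ξ ∈ A B := by
    refine (ae_ball_iff (countable_countableBasis X)).2 fun B hB => ?_
    by_cases hB₀ : ℙ (A B) = 0
    · exact Eventually.of_forall fun _ h => absurd hB₀ h
    · have hA : MeasurableSet (A B) := (hM_meas B (isOpen_of_mem_countableBasis hB)).compl
      exact (hT.ae_exists_iterate_mem hA hB₀).mono fun _ h _ => h
  filter_upwards [hrec] with ξ hξ x hx
  have hcover : {ζ | x ∉ M ζ} ⊆ ⋃ B ∈ {B ∈ 𝓑 | x ∈ B}, A B := fun ζ hζ => by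
    obtain ⟨B, hB, hxB, hBM⟩ := (isBasis_countableBasis X).exists_subset_of_mem_open hζ
      (hM_closed ζ).isOpen_compl
    exact mem_biUnion ⟨hB, hxB⟩ fun ⟨y, hyM, hyB⟩ => hBM hyB hyM
  rw [ae_iff]
  by_contra hpos
  obtain ⟨B, ⟨hB, hxB⟩, hB₀⟩ : ∃ B ∈ {B ∈ 𝓑 | x ∈ B}, ℙ (A B) ≠ 0 := by
    by_contra! hall
    exact hpos (measure_mono_null hcover ((measure_biUnion_null_iff
      ((countable_countableBasis X).mono fun _ h => h.1)).2 hall))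
  obtain ⟨k, hk⟩ := hξ B hB hB₀
  exact hk ⟨x, hx k, hxB⟩

end Ergodic

theorem ergodic_argmin_characterization_general {X : Type*} [MetricSpace X] [PolishSpace X]
    {Ξ : Type*} [MeasurableSpace Ξ] (ℙ : Measure Ξ) [IsProbabilityMeasure ℙ]
    (T : Ξ → Ξ) (hT : Ergodic T ℙ)
    (M : Ξ → Set X) (hM_closed : ∀ ξ, IsClosed (M ξ)) (hM_meas : MeasurableMultifun M)
    (g : X → EReal) (gn : ℕ → X → EReal)
    (hg_noBot : ∀ x, g x ≠ ⊥) (hg_lsc : LowerSemicontinuous g) (hcc : ContConv gn g)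
    (hfeas : ∃ x ∈ {y : X | ∀ᵐ ζ ∂ℙ, y ∈ M ζ}, g x < ⊤)
    (hlc : ∀ᵐ ξ ∂ℙ, EvLevelCompact gn (fun n => ⋂ k ∈ Finset.Icc 1 n, M (T^[k] ξ))) :
    ∀ᵐ ξ ∂ℙ,
      (⋂ ε ∈ Ioi (0 : ℝ), innerLim (fun n =>
          argminOn (gn n) (⋂ k ∈ Finset.Icc 1 n, M (T^[k] ξ)) ε)) =
        argminOn g {y : X | ∀ᵐ ζ ∂ℙ, y ∈ M ζ} 0 ∧
      argminOn g {y : X | ∀ᵐ ζ ∂ℙ, y ∈ M ζ} 0 =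
        ⋂ ε ∈ Ioi (0 : ℝ), outerLim (fun n =>
          argminOn (gn n) (⋂ k ∈ Finset.Icc 1 n, M (T^[k] ξ)) ε) := by
  filter_upwards [hT.toMeasurePreserving.ae_setOf_ae_mem_subset_iterate hM_closed,
    hT.ae_forall_mem_iterate_imp_ae_mem hM_closed hM_meas, hlc] with ξ hsub hsup hlcξ
  have hE : ⋂ n, ⋂ k ∈ Finset.Icc 1 n, M (T^[k] ξ) = {y : X | ∀ᵐ ζ ∂ℙ, y ∈ M ζ} :=
    Subset.antisymm
      (fun x hx => hsup x fun k => mem_iInter₂.1 (mem_iInter.1 hx (k + 1)) (k + 1) (by simp))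
      fun x hx => mem_iInter.2 fun n => mem_iInter₂.2 fun k _ => hsub k hx
  rw [← hE] at hfeas ⊢
  exact argminOn_iInter_eq_iInter_innerLim_and_outerLim
    (fun n => isClosed_biInter fun k _ => hM_closed _)
    (fun m n hmn => biInter_subset_biInter_left
      (Finset.coe_subset.2 (Finset.Icc_subset_Icc_right hmn)))
    hg_noBot hg_lsc hcc hfeas hlcξ

/-- if the robust problem is feasible and `g n` is eventually level-compact
on `E n ξ` a.s., then for a.e. `ξ`:
`⋂_{ε>0} liminf_n (ε-argmin_{E n ξ} g n) = argmin_{M_as} g = ⋂_{ε>0} limsup_n (ε-argmin_{E n ξ} g n)`. -/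
theorem ergodic_argmin_characterization {X : Type*} [MetricSpace X] [PolishSpace X]
    {Ξ : Type*} [MeasurableSpace Ξ] (ℙ : Measure Ξ) [IsProbabilityMeasure ℙ] [ℙ.IsComplete]
    (T : Ξ → Ξ) (hT : Ergodic T ℙ)
    (M : Ξ → Set X) (hM_closed : ∀ ξ, IsClosed (M ξ)) (hM_meas : MeasurableMultifun M)
    (g : X → EReal) (gn : ℕ → X → EReal)
    (hg_noBot : ∀ x, g x ≠ ⊥) (hgn_noBot : ∀ n x, gn n x ≠ ⊥)
    (hg_lsc : LowerSemicontinuous g) (hgn_lsc : ∀ n, LowerSemicontinuous (gn n))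
    (hcc : ContConv gn g)
    (hfeas : ∃ x ∈ {y : X | ∀ᵐ ζ ∂ℙ, y ∈ M ζ}, g x < ⊤)
    (hlc : ∀ᵐ ξ ∂ℙ, EvLevelCompact gn (fun n => ⋂ k ∈ Finset.Icc 1 n, M (T^[k] ξ))) :
    ∀ᵐ ξ ∂ℙ,
      (⋂ ε ∈ Ioi (0 : ℝ), innerLim (fun n =>
          argminOn (gn n) (⋂ k ∈ Finset.Icc 1 n, M (T^[k] ξ)) ε)) =
        argminOn g {y : X | ∀ᵐ ζ ∂ℙ, y ∈ M ζ} 0 ∧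
      argminOn g {y : X | ∀ᵐ ζ ∂ℙ, y ∈ M ζ} 0 =
        ⋂ ε ∈ Ioi (0 : ℝ), outerLim (fun n =>
          argminOn (gn n) (⋂ k ∈ Finset.Icc 1 n, M (T^[k] ξ)) ε) :=
  ergodic_argmin_characterization_general ℙ T hT M hM_closed hM_meas g gn hg_noBot hg_lsc hcc hfeas
    hlc
end
end

section
/- Let X be a Polish space, (Ξ, 𝒜, ℙ) a complete probability space with countable product (Ξ^∞, 𝒜^∞, ℙ^∞), M : Ξ ⇉ X a measurable set-valued map with closed values, g : X → ℝ ∪ {+∞} lower semicontinuous, and g_n : X → ℝ ∪ {+∞} a sequence of lower semicontinuous functions converging continuously to g. For ω = (ξ_k)_{k≥1} ∈ Ξ^∞ define f_n(ω, x) := g_n(x) + δ_{S_n(ω)}(x), where S_n(ω) := ⋂_{k=1}^n M(ξ_k), and f(x) := g(x) + δ_{M_as}(x), where M_as := {x ∈ X : x ∈ M(ξ) for ℙ-a.e. ξ}. Then for ℙ^∞-a.e. ω ∈ Ξ^∞, the functions f_n(ω, ·) epi-converge to f. -/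
open Filter Topology MeasureTheory Set

noncomputable section

/-!
For a fixed sample path `ω` everything is deterministic: if the sets `M k` are closed, then
`gₙ + δ_{⋂_{k<n} M k}` epi-converges to `g + δ_{⋂ₖ M k}`. The constant sequence is a recovery
sequence, and a limit of points lying frequently in the shrinking intersections lies in every
`M k`, which gives the liminf inequality. It therefore suffices that `⋂ₖ M (ω k) = M_as` almost
surely, and second countability of `X` reduces both inclusions to countably many events:
a countable dense subset of `M_as` lies in every `M (ω k)` almost surely, and each of the
countably many basic open sets that `M` misses with positive probability is almost surely
missed by some sample, because `P (no sample lands in G) ≤ ℙ(Gᶜ) ^ n → 0`.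
-/

theorem delta_nonneg {X : Type*} (A : Set X) (x : X) : 0 ≤ delta A x := by
  unfold delta; split <;> simp

theorem delta_of_mem {X : Type*} {A : Set X} {x : X} (h : x ∈ A) : delta A x = 0 := by
  simp [delta, h]

theorem delta_of_notMem {X : Type*} {A : Set X} {x : X} (h : x ∉ A) : delta A x = ⊤ := by
  simp [delta, h]

theorem mem_iInter_of_frequently_mem_iInter_range {X : Type*} [TopologicalSpace X]
    {M : ℕ → Set X} (hM : ∀ k, IsClosed (M k)) {u : ℕ → X} {x : X}
    (hu : Tendsto u atTop (𝓝 x)) (h : ∃ᶠ n in atTop, u n ∈ ⋂ k ∈ Finset.range n, M k) :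
    x ∈ ⋂ k, M k :=
  mem_iInter.2 fun k => (hM k).mem_of_frequently_of_tendsto
    ((h.and_eventually (eventually_gt_atTop k)).mono fun _ hn =>
      mem_iInter₂.1 hn.1 k (Finset.mem_range.2 hn.2)) hu

theorem epiConv_add_delta_iInter {X : Type*} [MetricSpace X] {M : ℕ → Set X}
    {g : X → EReal} {gn : ℕ → X → EReal} (hM : ∀ k, IsClosed (M k)) (hg : ∀ x, g x ≠ ⊥)
    (hcc : ContConv gn g) :
    EpiConv (fun n x => gn n x + delta (⋂ k ∈ Finset.range n, M k) x)
      (fun x => g x + delta (⋂ k, M k) x) := by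
  intro x
  refine ⟨fun u hu => ?_, fun _ => x, tendsto_const_nhds, ?_⟩
  · dsimp only
    by_cases hx : x ∈ ⋂ k, M k
    · rw [delta_of_mem hx, add_zero, ← (hcc x u hu).liminf_eq]
      exact liminf_le_liminf (.of_forall fun n => le_add_of_nonneg_right (delta_nonneg _ _))
    · have hout : ∀ᶠ n in atTop, u n ∉ ⋂ k ∈ Finset.range n, M k :=
        not_frequently.1 fun h => hx (mem_iInter_of_frequently_mem_iInter_range hM hu h)
      -- `⊥ + ⊤ = ⊥` in `EReal`; the limit `g x ≠ ⊥` keeps `gn n (u n)` off `⊥` eventually.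
      have htop : ∀ᶠ n in atTop, gn n (u n) + delta (⋂ k ∈ Finset.range n, M k) (u n) = ⊤ :=
        (hout.and ((hcc x u hu).eventually_ne (hg x))).mono fun n hn => by
          rw [delta_of_notMem hn.1, EReal.add_top_of_ne_bot hn.2]
      rw [liminf_congr htop, liminf_const]
      exact le_top
  · dsimp only
    by_cases hx : x ∈ ⋂ k, M k
    · have hxn (n : ℕ) : x ∈ ⋂ k ∈ Finset.range n, M k :=
        mem_iInter₂.2 fun k _ => mem_iInter.1 hx k
      simp only [delta_of_mem (hxn _), delta_of_mem hx, add_zero]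
      exact (hcc x _ tendsto_const_nhds).limsup_eq.le
    · rw [delta_of_notMem hx, EReal.add_top_of_ne_bot (hg x)]
      exact le_top

namespace IsProductMeasure

variable {Ξ : Type*} [MeasurableSpace Ξ] {ℙ : Measure Ξ} {P : Measure (ℕ → Ξ)}

theorem ae_forall_coord (hP : IsProductMeasure P ℙ) {p : Ξ → Prop} (hp : ∀ᵐ ξ ∂ℙ, p ξ) :
    ∀ᵐ ω ∂P, ∀ k, p (ω k) := by
  refine ae_all_iff.2 fun k => ?_
  set N := toMeasurable ℙ {ξ | ¬ p ξ}
  have hN : P {ω | ω k ∈ N} = 0 := by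
    simpa [N, measure_toMeasurable, ae_iff.1 hp] using
      hP {k} (fun _ => N) fun _ => measurableSet_toMeasurable _ _
  exact measure_mono_null (fun ω hω => subset_toMeasurable ℙ _ hω) hN

theorem ae_exists_coord_mem [IsProbabilityMeasure ℙ] (hP : IsProductMeasure P ℙ) {G : Set Ξ}
    (hG : MeasurableSet G) (hG₀ : ℙ G ≠ 0) : ∀ᵐ ω ∂P, ∃ k, ω k ∈ G := by
  have hlt : ℙ Gᶜ < 1 := by
    rw [prob_compl_eq_one_sub hG]
    exact ENNReal.sub_lt_self ENNReal.one_ne_top one_ne_zero hG₀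
  refine ae_iff.2 <| le_antisymm (ge_of_tendsto'
    (ENNReal.tendsto_pow_atTop_nhds_zero_of_lt_one hlt) fun n => ?_) zero_le
  calc P {ω | ¬ ∃ k, ω k ∈ G} ≤ P {ω | ∀ k ∈ Finset.range n, ω k ∈ Gᶜ} :=
        measure_mono fun ω hω k _ => fun hk => hω ⟨k, hk⟩
    _ = ℙ Gᶜ ^ n := (hP (Finset.range n) (fun _ => Gᶜ) fun _ => hG.compl).trans (by simp)

variable {X : Type*} [TopologicalSpace X] [SecondCountableTopology X] {M : Ξ → Set X}

theorem ae_subset_iInter (hP : IsProductMeasure P ℙ) (hM : ∀ ξ, IsClosed (M ξ)) :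
    ∀ᵐ ω ∂P, {y | ∀ᵐ ξ ∂ℙ, y ∈ M ξ} ⊆ ⋂ k, M (ω k) := by
  set T := {y | ∀ᵐ ξ ∂ℙ, y ∈ M ξ}
  obtain ⟨D₀, hD₀c, hD₀d⟩ := TopologicalSpace.exists_countable_dense T
  have hDc : (Subtype.val '' D₀).Countable := hD₀c.image _
  have hTD : T ⊆ closure (Subtype.val '' D₀) := fun y hy =>
    image_closure_subset_closure_image continuous_subtype_val
      (mem_image_of_mem _ (hD₀d ⟨y, hy⟩))
  have hD : ∀ᵐ ω ∂P, ∀ y ∈ Subtype.val '' D₀, ∀ k, y ∈ M (ω k) :=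
    (ae_ball_iff hDc).2 fun _ ⟨z, _, hz⟩ => hP.ae_forall_coord (hz ▸ z.2)
  filter_upwards [hD] with ω hω
  exact hTD.trans (subset_iInter fun k => closure_minimal (fun y hy => hω y hy k) (hM _))

theorem ae_iInter_subset [IsProbabilityMeasure ℙ] (hP : IsProductMeasure P ℙ)
    (hM : ∀ ξ, IsClosed (M ξ)) (hM_meas : MeasurableMultifun M) :
    ∀ᵐ ω ∂P, ⋂ k, M (ω k) ⊆ {y | ∀ᵐ ξ ∂ℙ, y ∈ M ξ} := by
  set B := TopologicalSpace.countableBasis X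
  have hB := TopologicalSpace.isBasis_countableBasis X
  have hmiss : ∀ᵐ ω ∂P, ∀ U ∈ B, ℙ {ξ | Disjoint (M ξ) U} ≠ 0 → ∃ k, Disjoint (M (ω k)) U := by
    refine (ae_ball_iff (TopologicalSpace.countable_countableBasis X)).2 fun U hU => ?_
    have hmeas : MeasurableSet {ξ | Disjoint (M ξ) U} := by
      simpa only [compl_ofPred, ← not_disjoint_iff_nonempty_inter, not_not] using
        (hM_meas U (hB.isOpen hU)).compl
    by_cases h₀ : ℙ {ξ | Disjoint (M ξ) U} = 0
    · exact .of_forall fun _ h => absurd h₀ h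
    · exact (hP.ae_exists_coord_mem hmeas h₀).mono fun _ h _ => h
  filter_upwards [hmiss] with ω hω x hx
  by_contra hxT
  have hcover : {ξ | x ∉ M ξ} ⊆ ⋃ U ∈ {U ∈ B | x ∈ U}, {ξ | Disjoint (M ξ) U} := fun ξ hξ => by
    obtain ⟨U, hUB, hxU, hUM⟩ := hB.exists_subset_of_mem_open hξ (hM ξ).isOpen_compl
    exact mem_biUnion ⟨hUB, hxU⟩ (subset_compl_iff_disjoint_left.1 hUM)
  obtain ⟨U, ⟨hUB, hxU⟩, hU₀⟩ : ∃ U ∈ {U ∈ B | x ∈ U}, ℙ {ξ | Disjoint (M ξ) U} ≠ 0 := by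
    by_contra! h
    exact hxT (ae_iff.2 (measure_mono_null hcover ((measure_biUnion_null_iff
      ((TopologicalSpace.countable_countableBasis X).mono (sep_subset _ _))).2 h)))
  obtain ⟨k, hk⟩ := hω U hUB hU₀
  exact hk.notMem_of_mem_left (mem_iInter.1 hx k) hxU

theorem ae_iInter_eq [IsProbabilityMeasure ℙ] (hP : IsProductMeasure P ℙ)
    (hM : ∀ ξ, IsClosed (M ξ)) (hM_meas : MeasurableMultifun M) :
    ∀ᵐ ω ∂P, ⋂ k, M (ω k) = {y | ∀ᵐ ξ ∂ℙ, y ∈ M ξ} := by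
  filter_upwards [hP.ae_iInter_subset hM hM_meas, hP.ae_subset_iInter hM] with ω h₁ h₂
  exact h₁.antisymm h₂

end IsProductMeasure

theorem scenario_epiConv_general {X : Type*} [MetricSpace X] [PolishSpace X]
    {Ξ : Type*} [MeasurableSpace Ξ] (ℙ : Measure Ξ) [IsProbabilityMeasure ℙ]
    (P : Measure (ℕ → Ξ)) (hP : IsProductMeasure P ℙ)
    (M : Ξ → Set X) (hM_closed : ∀ ξ, IsClosed (M ξ)) (hM_meas : MeasurableMultifun M)
    (g : X → EReal) (gn : ℕ → X → EReal)
    (hg_noBot : ∀ x, g x ≠ ⊥)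
    (hcc : ContConv gn g) :
    ∀ᵐ ω ∂P,
      EpiConv (fun n x => gn n x + delta (⋂ k ∈ Finset.range n, M (ω k)) x)
        (fun x => g x + delta {y : X | ∀ᵐ ζ ∂ℙ, y ∈ M ζ} x) := by
  filter_upwards [hP.ae_iInter_eq hM_closed hM_meas] with ω hω
  rw [← hω]
  exact epiConv_add_delta_iInter (fun k => hM_closed (ω k)) hg_noBot hcc

/-- scenario approach. With `P = ℙ^∞` the countable product measure on
sequences of samples, for `P`-a.e. `ω` the functions `f n (ω,·) = g n + δ_{S n ω}`,
with `S n ω = ⋂_{k=1}^n M (ω k)`, epi-converge to `f = g + δ_{M_as}`. -/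
theorem scenario_epiConv {X : Type*} [MetricSpace X] [PolishSpace X]
    {Ξ : Type*} [MeasurableSpace Ξ] (ℙ : Measure Ξ) [IsProbabilityMeasure ℙ] [ℙ.IsComplete]
    (P : Measure (ℕ → Ξ)) [IsProbabilityMeasure P] (hP : IsProductMeasure P ℙ)
    (M : Ξ → Set X) (hM_closed : ∀ ξ, IsClosed (M ξ)) (hM_meas : MeasurableMultifun M)
    (g : X → EReal) (gn : ℕ → X → EReal)
    (hg_noBot : ∀ x, g x ≠ ⊥) (hgn_noBot : ∀ n x, gn n x ≠ ⊥)
    (hg_lsc : LowerSemicontinuous g) (hgn_lsc : ∀ n, LowerSemicontinuous (gn n))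
    (hcc : ContConv gn g) :
    ∀ᵐ ω ∂P,
      EpiConv (fun n x => gn n x + delta (⋂ k ∈ Finset.range n, M (ω k)) x)
        (fun x => g x + delta {y : X | ∀ᵐ ζ ∂ℙ, y ∈ M ζ} x) :=
  scenario_epiConv_general ℙ P hP M hM_closed hM_meas g gn hg_noBot hcc
end
end
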